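/- Let u, s ∈ ℂ with (u+1)² ≠ s². Define the 4×4 matrix M(x) = α(x)·E₁₂ + β(x)·E₁₃ + β(x)·E₂₄ − α(x)·E₃₄ with α(x) = 4s² + 4x − 3 and β(x) = (2x − 1)². Then for k ∈ ℂ the matrix K = I₄ + k·(−E₂₂ + E₂₃ + E₃₂ − E₃₃ − 2·E₄₄) satisfies M(−u)·K = K·M(u) if and only if k = 2u/((u+1)² − s²). -/

import Mathlib

open Matrix

/-- The represented coproduct of the level-two twisted Yangian generator of
`Y(gl(1|1), gl(1|1))` at `t = 0`:
`M(x) = α(x)·E₁₂ + β(x)·E₁₃ + β(x)·E₂₄ − α(x)·E₃₄`. -/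
noncomputable def Mtgy (s x : ℂ) : Matrix (Fin 4) (Fin 4) ℂ :=
  !![0, 4 * s ^ 2 + 4 * x - 3, (2 * x - 1) ^ 2, 0;
     0, 0, 0, (2 * x - 1) ^ 2;
     0, 0, 0, -(4 * s ^ 2 + 4 * x - 3);
     0, 0, 0, 0]

/-!
Writing `K = I₄ + k·J`, every entry of `M(−u)·K − K·M(u)` is `±4(k·((u+1)² − s²) − 2u)`
or `0`, so the commutator is this single scalar times a fixed nonzero matrix and vanishes
exactly when `k·((u+1)² − s²) = 2u`.
-/

noncomputable def vectorBoundaryK (k : ℂ) : Matrix (Fin 4) (Fin 4) ℂ :=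
  1 + k • !![0, 0, 0, 0; 0, -1, 1, 0; 0, 1, -1, 0; 0, 0, 0, -2]

lemma vectorBoundaryK_eq (k : ℂ) :
    vectorBoundaryK k =
      !![1, 0, 0, 0; 0, 1 - k, k, 0; 0, k, 1 - k, 0; 0, 0, 0, 1 - 2 * k] := by
  ext i j
  fin_cases i <;> fin_cases j <;> simp [vectorBoundaryK, one_apply] <;> ring

lemma mtgy_neg_mul_vectorBoundaryK_sub (u s k : ℂ) :
    Mtgy s (-u) * vectorBoundaryK k - vectorBoundaryK k * Mtgy s u =
      (4 * (k * ((u + 1) ^ 2 - s ^ 2) - 2 * u)) •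
        !![0, 1, -1, 0; 0, 0, 0, -1; 0, 0, 0, -1; 0, 0, 0, 0] := by
  rw [vectorBoundaryK_eq]
  ext i j
  fin_cases i <;> fin_cases j <;> simp [Mtgy] <;> ring

lemma mtgy_neg_mul_vectorBoundaryK_eq_iff (u s k : ℂ) :
    Mtgy s (-u) * vectorBoundaryK k = vectorBoundaryK k * Mtgy s u ↔
      k * ((u + 1) ^ 2 - s ^ 2) = 2 * u := by
  have hN : (!![0, 1, -1, 0; 0, 0, 0, -1; 0, 0, 0, -1; 0, 0, 0, 0] :
      Matrix (Fin 4) (Fin 4) ℂ) ≠ 0 := fun h => by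
    simpa using congrFun (congrFun h 0) 1
  rw [← sub_eq_zero, mtgy_neg_mul_vectorBoundaryK_sub, smul_eq_zero, or_iff_left hN,
    mul_eq_zero, or_iff_right (by norm_num : (4 : ℂ) ≠ 0), sub_eq_zero]

/-- The K-matrix `I₄ + k·(−E₂₂ + E₂₃ + E₃₂ − E₃₃ − 2E₄₄)` intertwines the
level-two twisted Yangian generator iff `k = 2u/((u+1)² − s²)`. -/
theorem stmt19 (u s k : ℂ) (hs : (u + 1) ^ 2 ≠ s ^ 2) :
    Mtgy s (-u) *
        (1 + k • !![0, 0, 0, 0; 0, -1, 1, 0; 0, 1, -1, 0; 0, 0, 0, -2]) =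
      (1 + k • !![0, 0, 0, 0; 0, -1, 1, 0; 0, 1, -1, 0; 0, 0, 0, -2]) *
        Mtgy s u ↔
      k = 2 * u / ((u + 1) ^ 2 - s ^ 2) := by
  rw [eq_div_iff (sub_ne_zero.mpr hs)]
  exact mtgy_neg_mul_vectorBoundaryK_eq_iff u s k
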